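/- arXiv:math/9711203 — 6 statements merged into one kernel-verified Lean document; each statement's English description precedes it below -/
import Mathlib

section
/- Let G be a centreless group. Then Aut(G) is complete if and only if the subgroup Inn(G) of inner automorphisms is a characteristic subgroup of Aut(G). -/
section Aux

variable {G : Type*} [Group G]

lemma aux_conj_mulaut_conj (a : MulAut G) (g : G) :
    a * MulAut.conj g * a⁻¹ = MulAut.conj (a g) := by
  ext x
  simp [MulAut.conj_apply, mul_assoc]

lemma aux_conj_injective (hG : Subgroup.center G = ⊥) :
    Function.Injective (MulAut.conj : G →* MulAut G) := by
  intro x y hxy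
  have h : ∀ z : G, x * z * x⁻¹ = y * z * y⁻¹ := fun z => by
    have := congrArg (fun (e : MulAut G) => e z) hxy
    simpa [MulAut.conj_apply] using this
  have hc : y⁻¹ * x ∈ Subgroup.center G := by
    rw [Subgroup.mem_center_iff]
    intro z
    have := h z
    have : y⁻¹ * (x * z * x⁻¹) * x = y⁻¹ * (y * z * y⁻¹) * x := by rw [this]
    calc z * (y⁻¹ * x) = y⁻¹ * (y * z * y⁻¹) * x := by group
      _ = y⁻¹ * (x * z * x⁻¹) * x := by rw [h z]
      _ = y⁻¹ * x * z := by group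
  rw [hG, Subgroup.mem_bot] at hc
  have : y * (y⁻¹ * x) = y * 1 := by rw [hc]
  simpa using this

lemma aux_centralizer_inn (hG : Subgroup.center G = ⊥)
    (a : MulAut G) (h : ∀ g : G, a * MulAut.conj g * a⁻¹ = MulAut.conj g) :
    a = 1 := by
  ext g
  have := h g
  rw [aux_conj_mulaut_conj] at this
  exact aux_conj_injective hG this

end Aux

/-- For a centreless group `G`, the group `Aut G` is complete iff the subgroup
of inner automorphisms is characteristic in `Aut G`. -/
theorem aut_complete_iff_inn_characteristic (G : Type*) [Group G]
    (hG : Subgroup.center G = ⊥) :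
    (Subgroup.center (MulAut G) = ⊥ ∧
        ∀ f : MulAut (MulAut G), ∃ g : MulAut G, f = MulAut.conj g) ↔
      Subgroup.Characteristic (MulAut.conj : G →* MulAut G).range := by
  have hinj := aux_conj_injective hG
  constructor
  · rintro ⟨hZ, hinn⟩
    constructor
    intro ϕ
    obtain ⟨g, rfl⟩ := hinn ϕ
    ext a
    simp only [Subgroup.mem_comap, MulEquiv.coe_toMonoidHom, MulAut.conj_apply,
      MonoidHom.mem_range]
    constructor
    · rintro ⟨x, hx⟩
      refine ⟨g⁻¹ x, ?_⟩
      have h1 := aux_conj_mulaut_conj g⁻¹ x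
      rw [hx] at h1
      have h2 : g⁻¹ * (g * a * g⁻¹) * g⁻¹⁻¹ = a := by group
      rw [h2] at h1
      exact h1.symm
    · rintro ⟨x, rfl⟩
      exact ⟨g x, by rw [← aux_conj_mulaut_conj]⟩
  · intro hchar
    constructor
    · -- center of MulAut G is trivial
      rw [eq_bot_iff]
      intro a ha
      rw [Subgroup.mem_bot]
      refine aux_centralizer_inn hG a fun g => ?_
      have := (Subgroup.mem_center_iff.mp ha (MulAut.conj g)).symm
      rw [Subgroup.mem_center_iff] at ha
      have hcomm := ha (MulAut.conj g)
      calc a * MulAut.conj g * a⁻¹ = MulAut.conj g * a * a⁻¹ := by rw [hcomm]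
        _ = MulAut.conj g := by group
    · intro f
      have hmap : (MulAut.conj : G →* MulAut G).range.map f.toMonoidHom
          = (MulAut.conj : G →* MulAut G).range := by
        rw [Subgroup.map_equiv_eq_comap_symm']
        exact hchar.fixed f.symm
      set eG : G ≃* ((MulAut.conj : G →* MulAut G).range) := MonoidHom.ofInjective hinj with heG
      set θ : G ≃* G :=
        eG.trans ((f.subgroupMap _).trans ((MulEquiv.subgroupCongr hmap).trans eG.symm)) with hθ
      have hkey : ∀ g : G, MulAut.conj (θ g) = f (MulAut.conj g) := by
        intro g
        have h1 : MulAut.conj (θ g)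
            = ((MulEquiv.subgroupCongr hmap) ((f.subgroupMap _) (eG g)) : MulAut G) := by
          rw [hθ]
          simp only [MulEquiv.trans_apply]
          exact MonoidHom.apply_ofInjective_symm hinj _
        rw [h1]
        change f (eG g : MulAut G) = _
        have hco : (eG g : MulAut G) = MulAut.conj g := by
          rw [heG, MonoidHom.ofInjective_apply hinj]
        rw [hco]

      refine ⟨θ, MulEquiv.ext fun a => ?_⟩
      show f a = θ * a * θ⁻¹
      have hcen : ∀ g : G, (f a) * MulAut.conj g * (f a)⁻¹
          = (θ * a * θ⁻¹) * MulAut.conj g * (θ * a * θ⁻¹)⁻¹ := by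
        intro g
        set g' := θ.symm g with hg'
        have hθg' : θ g' = g := θ.apply_symm_apply g
        have lhs : (f a) * MulAut.conj g * (f a)⁻¹ = MulAut.conj (θ (a g')) := by
          rw [← hθg', hkey g', ← map_inv, ← map_mul, ← map_mul, aux_conj_mulaut_conj, hkey]
        have rhs : (θ * a * θ⁻¹) * MulAut.conj g * (θ * a * θ⁻¹)⁻¹
            = MulAut.conj ((θ * a * θ⁻¹) g) := aux_conj_mulaut_conj _ g
        rw [lhs, rhs]
        congr 2
      have hone : (θ * a * θ⁻¹)⁻¹ * f a = 1 := by
        refine aux_centralizer_inn hG _ fun g => ?_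
        have := hcen g
        calc (θ * a * θ⁻¹)⁻¹ * f a * MulAut.conj g * ((θ * a * θ⁻¹)⁻¹ * f a)⁻¹
            = (θ * a * θ⁻¹)⁻¹ * (f a * MulAut.conj g * (f a)⁻¹) * (θ * a * θ⁻¹) := by group
          _ = (θ * a * θ⁻¹)⁻¹ * ((θ * a * θ⁻¹) * MulAut.conj g * (θ * a * θ⁻¹)⁻¹)
                * (θ * a * θ⁻¹) := by rw [this]
          _ = MulAut.conj g := by group
      have := mul_eq_one_iff_inv_eq.mp hone
      rw [← this]
      simp
end

section
/- Let F be a free group with basis {x} ∪ Y where x ∉ Y. The map sending x to x⁻¹ and each y ∈ Y to x·y·x⁻¹ extends to an automorphism φ of F, and φ has order exactly 2. -/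
/-- On a free group with basis `{x} ∪ Y`, the map `x ↦ x⁻¹`, `y ↦ x y x⁻¹`
extends to an automorphism of order exactly 2 (a quasi-conjugation). -/
theorem quasi_conjugation_is_involution (α : Type*) (x : α) (Y : Set α)
    (hx : x ∉ Y) (hY : Y.Nonempty) (hcover : ∀ a : α, a = x ∨ a ∈ Y) :
    ∃ φ : MulAut (FreeGroup α),
      φ (FreeGroup.of x) = (FreeGroup.of x)⁻¹ ∧
      (∀ y ∈ Y, φ (FreeGroup.of y)
        = FreeGroup.of x * FreeGroup.of y * (FreeGroup.of x)⁻¹) ∧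
      orderOf φ = 2 := by
  classical
  set f : FreeGroup α →* FreeGroup α :=
    FreeGroup.lift (fun a => if a = x then (FreeGroup.of x)⁻¹
      else FreeGroup.of x * FreeGroup.of a * (FreeGroup.of x)⁻¹) with hf
  have hfx : f (FreeGroup.of x) = (FreeGroup.of x)⁻¹ := by simp [hf]
  have hfy : ∀ a, a ≠ x →
      f (FreeGroup.of a) = FreeGroup.of x * FreeGroup.of a * (FreeGroup.of x)⁻¹ := by
    intro a ha; simp [hf, ha]
  have hcomp : f.comp f = MonoidHom.id _ := by
    apply FreeGroup.ext_hom
    intro a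
    by_cases ha : a = x
    · subst ha; simp [hfx]
    · simp [hfy a ha, hfx, mul_assoc]
  have hff : ∀ g, f (f g) = g := fun g => DFunLike.congr_fun hcomp g
  let φ : MulAut (FreeGroup α) :=
    { toFun := f, invFun := f, left_inv := hff, right_inv := hff,
      map_mul' := f.map_mul }
  have hφx : φ (FreeGroup.of x) = (FreeGroup.of x)⁻¹ := hfx
  have hsq : φ ^ 2 = 1 := by
    ext g
    show φ (φ g) = g
    exact hff g
  have hne : φ ≠ 1 := by
    intro h
    have h1 : (FreeGroup.of x)⁻¹ = FreeGroup.of x := by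
      rw [← hφx, h]; rfl
    have := congrArg (FreeGroup.lift (fun _ : α => Multiplicative.ofAdd (1 : ℤ))) h1
    simp only [map_inv, FreeGroup.lift_apply_of] at this
    have h2 := congrArg Multiplicative.toAdd this
    simp at h2
  exact ⟨φ, hφx, fun y hy => hfy y (fun h => hx (h ▸ hy)),
    orderOf_eq_prime hsq hne⟩
end

section
/- Let F be a free group with basis {x} ∪ Y and let φ be the quasi-conjugation with φ(x) = x⁻¹ and φ(y) = x y x⁻¹ for y ∈ Y. If a ∈ F satisfies φ(a) = a⁻¹, then there exists w ∈ F such that a = φ(w)·w⁻¹ or a = φ(w)·x·w⁻¹. -/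
set_option linter.unusedSectionVars false

namespace QC
open FreeGroup List

variable {α : Type*} [DecidableEq α]

/-- non-cancellation relation on letters -/
def NC (p q : α × Bool) : Prop := p.1 = q.1 → p.2 = q.2

/-- reduced word -/
def RedW (w : List (α × Bool)) : Prop := List.Chain' NC w

lemma nc_iff {p q : α × Bool} : NC p q ↔ ¬(p.1 = q.1 ∧ p.2 = !q.2) := by
  constructor
  · rintro h ⟨h1, h2⟩
    have := h h1
    rw [this] at h2
    cases q.2 <;> simp_all
  · intro h h1
    by_contra h2
    exact h ⟨h1, by cases q.2 <;> cases hp : p.2 <;> simp_all⟩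

lemma reduce_eq_self {w : List (α × Bool)} (h : RedW w) : reduce w = w := by
  induction w with
  | nil => rfl
  | cons hd t ih =>
    rw [reduce.cons, ih h.tail]
    cases t with
    | nil => rfl
    | cons hd2 t2 =>
      have h1 : ¬(hd.1 = hd2.1 ∧ hd.2 = !hd2.2) := nc_iff.mp (isChain_cons_cons.mp h).1
      simp only [h1, if_false]

lemma redW_reduce (L : List (α × Bool)) : RedW (reduce L) := by
  induction L with
  | nil => exact isChain_nil
  | cons hd t ih =>
    rw [reduce.cons]
    rcases hr : reduce t with _ | ⟨hd2, t2⟩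
    · exact isChain_singleton _
    · rw [hr] at ih
      by_cases h : hd.1 = hd2.1 ∧ hd.2 = !hd2.2
      · simp only [h, if_true]
        exact ih.tail
      · simp only [h, if_false]
        exact isChain_cons_cons.mpr ⟨nc_iff.mpr h, ih⟩

lemma toWord_mk_of_redW {w : List (α × Bool)} (h : RedW w) : (FreeGroup.mk w).toWord = w := by
  rw [toWord_mk, reduce_eq_self h]

lemma redW_toWord (a : FreeGroup α) : RedW a.toWord := by
  rw [← mk_toWord (x := a), toWord_mk]
  exact redW_reduce _

/-- if all letters of a reduced word are equal in the first component, the word is constant -/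
lemma redW_const {c : α} {w : List (α × Bool)} (h : RedW w) (hc : ∀ l ∈ w, l.1 = c) :
    ∃ b : Bool, w = List.replicate w.length (c, b) := by
  induction w with
  | nil => exact ⟨true, rfl⟩
  | cons hd t ih =>
    obtain ⟨b, hb⟩ := ih h.tail (fun l hl => hc l (mem_cons_of_mem _ hl))
    refine ⟨hd.2, ?_⟩
    have hhd : hd = (c, hd.2) := by
      have := hc hd mem_cons_self
      exact Prod.ext this rfl
    rw [length_cons, List.replicate_succ]
    cases t with
    | nil => simpa using hhd
    | cons hd2 t2 =>
      have hnc : NC hd hd2 := (isChain_cons_cons.mp h).1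
      have e1 : hd.1 = hd2.1 := by
        rw [hc hd mem_cons_self, hc hd2 (by simp)]
      have e2 : hd.2 = hd2.2 := hnc e1
      have hb2 : b = hd2.2 := by
        have := List.mem_replicate.mp (hb ▸ (List.mem_cons_self (a := hd2) (l := t2)))
        exact (congrArg Prod.snd this.2.symm)
      rw [hb]
      have hcb : (c, b) = (c, hd.2) := by rw [hb2, e2]
      rw [hcb, length_replicate, ← hhd]


section Decomp

variable (x : α)

/-- the word `x^k` -/
def xw (k : ℤ) : List (α × Bool) := List.replicate k.natAbs (x, decide (0 ≤ k))

/-- a nonempty reduced word avoiding `x` -/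
def YW (A : List (α × Bool)) : Prop := A ≠ [] ∧ RedW A ∧ ∀ l ∈ A, l.1 ≠ x

/-- validity of a syllable list: all words are Y-words and all exponents except
possibly the last are nonzero -/
def Vl : List (List (α × Bool) × ℤ) → Prop
  | [] => True
  | (A, _) :: [] => YW x A
  | (A, k) :: p :: ps => YW x A ∧ k ≠ 0 ∧ Vl (p :: ps)

/-- the word attached to a decomposition -/
def wOf : ℤ → List (List (α × Bool) × ℤ) → List (α × Bool)
  | k, [] => xw x k
  | k, (A, k') :: ps => xw x k ++ (A ++ wOf k' ps)

/-- the group element attached to a decomposition -/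
def mkD (k : ℤ) (ps : List (List (α × Bool) × ℤ)) : FreeGroup α := FreeGroup.mk (wOf x k ps)

variable {x}

lemma xw_all (k : ℤ) : ∀ l ∈ xw x k, l.1 = x := by
  intro l hl
  rw [xw, List.mem_replicate] at hl
  rw [hl.2]

lemma xw_redW (k : ℤ) : RedW (xw x k) := by
  apply List.isChain_replicate_of_rel
  intro _
  rfl

lemma xw_zero : xw x 0 = [] := rfl

lemma xw_eq_nil_iff {k : ℤ} : xw x k = [] ↔ k = 0 := by
  rw [xw, List.replicate_eq_nil_iff]
  omega

lemma xw_injective {k k' : ℤ} (h : xw x k = xw x k') : k = k' := by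
  have hlen : k.natAbs = k'.natAbs := by
    have := congrArg List.length h
    simpa [xw] using this
  rcases eq_or_ne k 0 with rfl | hk
  · omega
  · have hne : xw x k ≠ [] := by rw [Ne, xw_eq_nil_iff]; exact hk
    have hb : (x, decide (0 ≤ k)) = (x, decide (0 ≤ k')) := by
      have h1 : (xw x k).head hne = (x, decide (0 ≤ k)) := List.head_replicate _
      have h2 : (xw x k').head (h ▸ hne) = (x, decide (0 ≤ k')) := List.head_replicate _
      rw [← h1, ← h2]
      congr 1
    have : (0 ≤ k) = (0 ≤ k') := by
      have := congrArg Prod.snd hb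
      simpa using this
    have : (0 ≤ k) ↔ (0 ≤ k') := by rw [this]
    omega

lemma Vl.tail {p : List (α × Bool) × ℤ} {ps : List (List (α × Bool) × ℤ)}
    (h : Vl x (p :: ps)) : Vl x ps := by
  rcases ps with _ | ⟨q, qs⟩
  · trivial
  · exact h.2.2

lemma Vl.head_YW {A : List (α × Bool)} {k : ℤ} {ps : List (List (α × Bool) × ℤ)}
    (h : Vl x ((A, k) :: ps)) : YW x A := by
  rcases ps with _ | ⟨q, qs⟩
  · exact h
  · exact h.1

lemma Vl.head_ne {A : List (α × Bool)} {k : ℤ} {ps : List (List (α × Bool) × ℤ)}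
    (h : Vl x ((A, k) :: ps)) (hps : ps ≠ []) : k ≠ 0 := by
  rcases ps with _ | ⟨q, qs⟩
  · exact absurd rfl hps
  · exact h.2.1

lemma wOf_nil (k : ℤ) : wOf x k [] = xw x k := rfl

lemma wOf_cons (k : ℤ) (A : List (α × Bool)) (k' : ℤ) (ps : List (List (α × Bool) × ℤ)) :
    wOf x k ((A, k') :: ps) = xw x k ++ (A ++ wOf x k' ps) := rfl

lemma wOf_eq (k : ℤ) (ps : List (List (α × Bool) × ℤ)) :
    wOf x k ps = xw x k ++ wOf x 0 ps := by
  rcases ps with _ | ⟨⟨A, k'⟩, ps⟩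
  · simp [wOf_nil, xw_zero]
  · rw [wOf_cons, wOf_cons, xw_zero]
    simp

lemma wOf_zero_eq_nil_iff {ps : List (List (α × Bool) × ℤ)} (h : Vl x ps) :
    wOf x 0 ps = [] ↔ ps = [] := by
  rcases ps with _ | ⟨⟨A, k'⟩, ps⟩
  · simp [wOf_nil, xw_zero]
  · rw [wOf_cons, xw_zero]
    simp only [nil_append, List.append_eq_nil_iff]
    have := h.head_YW.1
    simp_all

lemma wOf_zero_head {A : List (α × Bool)} {k' : ℤ} {ps : List (List (α × Bool) × ℤ)}
    (hA : A ≠ []) : (wOf x 0 ((A, k') :: ps)).head? = A.head? := by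
  rw [wOf_cons, xw_zero, nil_append, head?_append_of_ne_nil _ hA]


lemma wOf_head_x {k : ℤ} {ps : List (List (α × Bool) × ℤ)}
    (h : k ≠ 0 ∨ ps = []) : ∀ b ∈ (wOf x k ps).head?, b.1 = x := by
  intro b hb
  rcases h with h | rfl
  · rw [wOf_eq] at hb
    have hne : xw x k ≠ [] := by rw [Ne, xw_eq_nil_iff]; exact h
    rw [head?_append_of_ne_nil _ hne] at hb
    exact xw_all k b (List.mem_of_mem_head? hb)
  · exact xw_all k b (List.mem_of_mem_head? hb)

lemma wOf_redW {ps : List (List (α × Bool) × ℤ)} (h : Vl x ps) :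
    ∀ k, RedW (wOf x k ps) := by
  induction ps with
  | nil => exact fun k => xw_redW k
  | cons p ps ih =>
    obtain ⟨A, k'⟩ := p
    intro k
    rw [wOf_cons]
    unfold RedW Chain'
    rw [isChain_append]
    refine ⟨xw_redW k, ?_, ?_⟩
    · rw [isChain_append]
      refine ⟨h.head_YW.2.1, ih h.tail k', ?_⟩
      intro a ha b hb
      have hbx : b.1 = x := by
        refine wOf_head_x ?_ b hb
        rcases eq_or_ne ps [] with rfl | hne
        · exact Or.inr rfl
        · exact Or.inl (h.head_ne hne)
      intro hab
      exact absurd (hab.trans hbx) (h.head_YW.2.2 a (List.mem_of_mem_getLast? ha))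
    · intro a ha b hb
      have hax : a.1 = x := xw_all k a (List.mem_of_mem_getLast? ha)
      have hbA : b ∈ A := by
        rw [head?_append_of_ne_nil _ h.head_YW.1] at hb
        exact List.mem_of_mem_head? hb
      intro hab
      exact absurd (hab.symm.trans hax) (h.head_YW.2.2 b hbA)


lemma span_spec {β : Type*} (p : β → Bool) (l1 l2 : List β) (h1 : ∀ a ∈ l1, p a)
    (h2 : ∀ a ∈ l2.head?, ¬ p a) :
    List.takeWhile p (l1 ++ l2) = l1 ∧ List.dropWhile p (l1 ++ l2) = l2 := by
  induction l1 with
  | nil =>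
    simp only [nil_append]
    cases l2 with
    | nil => simp
    | cons b t =>
      have hb : ¬ p b := h2 b rfl
      simp [List.takeWhile_cons, List.dropWhile_cons, hb]
  | cons a l1 ih =>
    have ha : p a := h1 a mem_cons_self
    have := ih (fun a ha => h1 a (mem_cons_of_mem _ ha))
    simp [List.takeWhile_cons, List.dropWhile_cons, ha, this.1, this.2]

variable (x)

/-- the "is an x-letter" test -/
def px (l : α × Bool) : Bool := decide (l.1 = x)

variable {x}

lemma run_eq_xw {r : List (α × Bool)} (hr : RedW r) (hc : ∀ l ∈ r, l.1 = x) :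
    ∃ k, r = xw x k := by
  obtain ⟨b, hb⟩ := redW_const hr hc
  rcases Nat.eq_zero_or_pos r.length with h0 | hpos
  · refine ⟨0, ?_⟩
    rw [hb, h0, xw_zero]
    rfl
  · cases b with
    | true =>
      refine ⟨(r.length : ℤ), ?_⟩
      rw [hb]
      simp [xw]
    | false =>
      refine ⟨-(r.length : ℤ), ?_⟩
      rw [hb]
      have hneg : ¬ ((0:ℤ) ≤ -(r.length : ℤ)) := by omega
      simp [xw, hneg, em]

lemma head?_dropWhile_not {β : Type*} (p : β → Bool) (l : List β) :
    ∀ a ∈ (l.dropWhile p).head?, ¬ p a := by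
  induction l with
  | nil => simp
  | cons hd t ih =>
    by_cases hp : p hd
    · rw [List.dropWhile_cons_of_pos hp]
      exact ih
    · rw [List.dropWhile_cons_of_neg hp]
      intro a ha
      rw [head?_cons, Option.mem_some_iff] at ha
      rwa [ha] at hp

lemma parse : ∀ n (w : List (α × Bool)), w.length ≤ n → RedW w →
    ∃ k ps, Vl x ps ∧ wOf x k ps = w := by
  intro n
  induction n with
  | zero =>
    intro w hw _
    rw [Nat.le_zero, List.length_eq_zero_iff] at hw
    exact ⟨0, [], trivial, by rw [hw, wOf_nil, xw_zero]⟩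
  | succ n ih =>
    intro w hw hred
    set r := w.takeWhile (px x) with hrdef
    set rest := w.dropWhile (px x) with hrestdef
    have hsplit : r ++ rest = w := List.takeWhile_append_dropWhile
    obtain ⟨k, hk⟩ : ∃ k, r = xw x k := by
      refine run_eq_xw (hred.prefix (List.takeWhile_prefix _)) ?_
      intro l hl
      have := List.mem_takeWhile_imp hl
      rwa [px, decide_eq_true_eq] at this
    rcases hrest : rest with _ | ⟨r0, rest'⟩
    · refine ⟨k, [], trivial, ?_⟩
      rw [wOf_nil, ← hk, ← hsplit, hrest, append_nil]
    · have hr0 : ¬ px x r0 := by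
        have h0 : 0 < rest.length := by rw [hrest]; simp
        have := List.dropWhile_get_zero_not (px x) w (by rwa [← hrestdef])
        simpa [← hrestdef, hrest] using this
      set A := rest.takeWhile (fun l => ! px x l) with hAdef
      set rest2 := rest.dropWhile (fun l => ! px x l) with hrest2def
      have hsplit2 : A ++ rest2 = rest := List.takeWhile_append_dropWhile
      have hA0 : A ≠ [] := by
        rw [hAdef, hrest, List.takeWhile_cons_of_pos (by simpa using hr0)]
        simp
      have hAx : ∀ l ∈ A, l.1 ≠ x := by
        intro l hl
        have := List.mem_takeWhile_imp hl
        simp only [Bool.not_eq_true'] at this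
        rw [px, decide_eq_false_iff_not] at this
        exact this
      have hrestred : RedW rest := hred.suffix (List.dropWhile_suffix _)
      have hAred : RedW A := hrestred.prefix (List.takeWhile_prefix _)
      have hr2red : RedW rest2 := hrestred.suffix (List.dropWhile_suffix _)
      have hlen : rest2.length ≤ n := by
        have h1 : r.length + rest.length = w.length := by
          rw [← hsplit]; simp
        have h2 : A.length + rest2.length = rest.length := by
          rw [← hsplit2]; simp
        have h3 : 0 < A.length := List.length_pos_iff.mpr hA0
        omega
      obtain ⟨k2, ps2, hvl2, hw2⟩ := ih rest2 hlen hr2red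
      have hk2 : ps2 ≠ [] → k2 ≠ 0 := by
        intro hps2 hk20
        rcases ps2 with _ | ⟨⟨B, j⟩, ps2'⟩
        · exact hps2 rfl
        · subst hk20
          have hBne : B ≠ [] := hvl2.head_YW.1
          have hhead : rest2.head? = B.head? := by
            rw [← hw2, wOf_zero_head hBne]
          have hr2ne : rest2 ≠ [] := by
            rw [← hw2]
            rw [wOf_cons, xw_zero, nil_append]
            simp [hBne]
          obtain ⟨b0, L0, rest2'⟩ := List.exists_cons_of_ne_nil hr2ne
          have hb0px : px x b0 := by
            have := head?_dropWhile_not (fun l => ! px x l) rest b0 ?_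
            · simpa using this
            · rw [← hrest2def, rest2']
              rfl
          have : b0 ∈ B.head? := by rw [← hhead, rest2']; rfl
          have hb0B : b0 ∈ B := List.mem_of_mem_head? this
          have := hvl2.head_YW.2.2 b0 hb0B
          rw [px, decide_eq_true_eq] at hb0px
          exact this hb0px
      refine ⟨k, (A, k2) :: ps2, ?_, ?_⟩
      · rcases ps2 with _ | ⟨q, qs⟩
        · exact ⟨hA0, hAred, hAx⟩
        · exact ⟨⟨hA0, hAred, hAx⟩, hk2 (by simp), hvl2⟩
      · rw [wOf_cons, ← hk, hw2, hsplit2, hsplit]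

lemma wOf_inj : ∀ (ps ps' : List (List (α × Bool) × ℤ)) (k k' : ℤ), Vl x ps → Vl x ps' →
    wOf x k ps = wOf x k' ps' → k = k' ∧ ps = ps' := by
  have hspan : ∀ (ps : List (List (α × Bool) × ℤ)) (k : ℤ), Vl x ps →
      (List.takeWhile (px x) (wOf x k ps) = xw x k ∧
       List.dropWhile (px x) (wOf x k ps) = wOf x 0 ps) := by
    intro ps k hvl
    rw [wOf_eq]
    refine span_spec _ _ _ (fun a ha => by simp [px, xw_all k a ha]) ?_
    intro a ha
    rcases ps with _ | ⟨⟨A, j⟩, ps⟩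
    · rw [wOf_nil, xw_zero] at ha; exact absurd ha (by simp)
    · rw [wOf_zero_head hvl.head_YW.1] at ha
      have := hvl.head_YW.2.2 a (List.mem_of_mem_head? ha)
      simp [px, this]
  intro ps
  induction ps with
  | nil =>
    intro ps' k k' hvl hvl' heq
    have h1 := hspan [] k hvl
    have h2 := hspan ps' k' hvl'
    rw [heq] at h1
    have hk : k = k' := xw_injective (h1.1.symm.trans h2.1)
    have hw0 : wOf x 0 ([] : List (List (α × Bool) × ℤ)) = wOf x 0 ps' :=
      h1.2.symm.trans h2.2
    rw [wOf_nil, xw_zero] at hw0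
    have := (wOf_zero_eq_nil_iff hvl').mp hw0.symm
    exact ⟨hk, this.symm⟩
  | cons p ps ih =>
    obtain ⟨A, k2⟩ := p
    intro ps' k k' hvl hvl' heq
    have h1 := hspan ((A, k2) :: ps) k hvl
    have h2 := hspan ps' k' hvl'
    rw [heq] at h1
    have hk : k = k' := xw_injective (h1.1.symm.trans h2.1)
    have hw0 : wOf x 0 ((A, k2) :: ps) = wOf x 0 ps' := h1.2.symm.trans h2.2
    rcases ps' with _ | ⟨⟨A', k2'⟩, ps'⟩
    · rw [wOf_nil, xw_zero] at hw0
      have : wOf x 0 ((A, k2) :: ps) = [] := hw0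
      rw [(wOf_zero_eq_nil_iff hvl)] at this
      exact absurd this (by simp)
    · rw [wOf_cons, wOf_cons, xw_zero, nil_append, nil_append] at hw0
      have hASpec : ∀ (B : List (α × Bool)) (j : ℤ) (qs : List (List (α × Bool) × ℤ)),
          Vl x ((B, j) :: qs) →
          List.takeWhile (fun l => ! px x l) (B ++ wOf x j qs) = B ∧
          List.dropWhile (fun l => ! px x l) (B ++ wOf x j qs) = wOf x j qs := by
        intro B j qs hv
        refine span_spec _ _ _ ?_ ?_
        · intro a ha
          simp [px, hv.head_YW.2.2 a ha]
        · intro a ha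
          have hax : a.1 = x := by
            refine wOf_head_x ?_ a ha
            rcases eq_or_ne qs [] with rfl | hne
            · exact Or.inr rfl
            · exact Or.inl (hv.head_ne hne)
          simp [px, hax]
      have hA1 := hASpec A k2 ps hvl
      have hA2 := hASpec A' k2' ps' hvl'
      rw [hw0] at hA1
      have hAA : A = A' := hA1.1.symm.trans hA2.1
      have hrest : wOf x k2 ps = wOf x k2' ps' := hA1.2.symm.trans hA2.2
      obtain ⟨hk2, hps⟩ := ih ps' k2 k2' hvl.tail hvl'.tail hrest
      exact ⟨hk, by rw [hAA, hk2, hps]⟩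

lemma mkD_inj {ps ps' : List (List (α × Bool) × ℤ)} {k k' : ℤ} (hvl : Vl x ps)
    (hvl' : Vl x ps') (h : mkD x k ps = mkD x k' ps') : k = k' ∧ ps = ps' := by
  apply wOf_inj ps ps' k k' hvl hvl'
  have := congrArg FreeGroup.toWord h
  rwa [mkD, mkD, toWord_mk_of_redW (wOf_redW hvl k), toWord_mk_of_redW (wOf_redW hvl' k')] at this


lemma mk_replicate_true (c : α) (n : ℕ) :
    FreeGroup.mk (List.replicate n (c, true)) = (FreeGroup.of c) ^ n := by
  induction n with
  | zero => simp [← one_eq_mk]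
  | succ n ih =>
    rw [List.replicate_succ, pow_succ']
    rw [show ((c, true) :: List.replicate n (c, true)) = [(c, true)] ++ List.replicate n (c, true) from rfl,
      ← mul_mk, ih]
    rfl

lemma invRev_replicate (c : α) (n : ℕ) :
    invRev (List.replicate n (c, true)) = List.replicate n (c, false) := by
  simp [invRev, List.map_replicate, List.reverse_replicate]

lemma mk_xw (k : ℤ) : FreeGroup.mk (xw x k) = (FreeGroup.of x) ^ k := by
  by_cases h : 0 ≤ k
  · have hd : decide (0 ≤ k) = true := by simpa using h
    rw [xw, hd, mk_replicate_true, ← zpow_natCast, Int.natAbs_of_nonneg h]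
  · have hd : decide (0 ≤ k) = false := by simpa using h
    rw [xw, hd, ← invRev_replicate, ← inv_mk, mk_replicate_true, ← zpow_natCast, ← zpow_neg]
    congr 1
    omega

lemma mkD_nil' (k : ℤ) : mkD x k [] = (FreeGroup.of x) ^ k := by
  rw [mkD, wOf_nil, mk_xw]

lemma mkD_cons' (k : ℤ) (A : List (α × Bool)) (k' : ℤ) (ps : List (List (α × Bool) × ℤ)) :
    mkD x k ((A, k') :: ps) = (FreeGroup.of x) ^ k * FreeGroup.mk A * mkD x k' ps := by
  rw [mkD, wOf_cons, ← mul_mk, ← mul_mk, mk_xw, mkD, mul_assoc]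

lemma mkD_shift (c d : ℤ) (ps : List (List (α × Bool) × ℤ)) :
    mkD x (c + d) ps = (FreeGroup.of x) ^ c * mkD x d ps := by
  rw [mkD, mkD, wOf_eq (c + d) ps, wOf_eq d ps, ← mul_mk, ← mul_mk, mk_xw, mk_xw, zpow_add, mul_assoc]

lemma wOf_concat (c : ℤ) (qs : List (List (α × Bool) × ℤ)) (B : List (α × Bool)) (j : ℤ) :
    wOf x c (qs ++ [(B, j)]) = wOf x c qs ++ (B ++ xw x j) := by
  induction qs generalizing c with
  | nil => simp [wOf_cons, wOf_nil]
  | cons p qs ih =>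
    obtain ⟨A, k'⟩ := p
    rw [List.cons_append, wOf_cons, wOf_cons, ih k']
    simp

lemma mkD_concat (c : ℤ) (qs : List (List (α × Bool) × ℤ)) (B : List (α × Bool)) (j : ℤ) :
    mkD x c (qs ++ [(B, j)]) = mkD x c qs * FreeGroup.mk B * (FreeGroup.of x) ^ j := by
  rw [mkD, wOf_concat, ← mul_mk, ← mul_mk, mk_xw, mkD, mul_assoc]


lemma invRev_getElem (A : List (α × Bool)) (i : ℕ) (h : i < (invRev A).length) :
    (invRev A)[i] = ((A[A.length - 1 - i]'(by simp at h; omega)).1,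
      !(A[A.length - 1 - i]'(by simp at h; omega)).2) := by
  simp [invRev, List.getElem_reverse]

lemma eq_invRev_false {A : List (α × Bool)} (h0 : A ≠ []) (hr : RedW A)
    (he : A = invRev A) : False := by
  have hn : 0 < A.length := List.length_pos_iff.mpr h0
  set n := A.length with hndef
  have key : ∀ i j (hi : i < n) (hj : j < n), j = n - 1 - i →
      A[i]'hi = ((A[j]'hj).1, !(A[j]'hj).2) := by
    intro i j hi hj hij
    subst hij
    have e1 : A[i]'hi = (invRev A)[i]'(by simpa using hi) := List.getElem_of_eq he hi
    rw [e1, invRev_getElem]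
  rcases Nat.even_or_odd n with ⟨m, hm⟩ | ⟨m, hm⟩
  · -- n = m + m, look at positions m-1 and m
    have hm1 : 0 < m := by omega
    have h1 : m - 1 < n := by omega
    have h2 : m < n := by omega
    have hnc : NC (A[m-1]'h1) (A[m]'h2) := by
      have := List.isChain_iff_getElem.mp hr (m - 1) (by omega)
      simpa [List.get_eq_getElem, show m - 1 + 1 = m by omega] using this
    have this := key (m-1) m h1 h2 (by omega)
    have h1' : (A[m-1]'h1).1 = (A[m]'h2).1 := by rw [this]
    have h2' : (A[m-1]'h1).2 = !(A[m]'h2).2 := by rw [this]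
    have := hnc h1'
    rw [this] at h2'
    cases hb : (A[m]'h2).2 <;> simp [hb] at h2'
  · -- n = 2m+1, look at position m
    have h1 : m < n := by omega
    have := key m m h1 h1 (by omega)
    have := congrArg Prod.snd this
    simp at this

lemma YW_invRev {A : List (α × Bool)} (h : YW x A) : YW x (invRev A) := by
  obtain ⟨h0, hr, hy⟩ := h
  refine ⟨?_, ?_, ?_⟩
  · intro hcon
    have := congrArg List.length hcon
    simp at this
    exact h0 this
  · rw [invRev]
    unfold RedW Chain'
    rw [List.isChain_reverse]
    have : RedW (List.map (fun g : α × Bool => (g.1, !g.2)) A) := by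
      unfold RedW Chain'
      rw [List.isChain_map]
      refine List.IsChain.imp ?_ hr
      intro a b hab h1
      simpa using congrArg Bool.not (hab h1)
    refine List.IsChain.imp ?_ this
    intro a b hab h1
    exact (hab h1.symm).symm
  · intro l hl
    rw [invRev, List.mem_reverse, List.mem_map] at hl
    obtain ⟨a, ha, rfl⟩ := hl
    exact hy a ha

/-- negate exponents, with an extra `-1` on the final exponent -/
def negL : List (List (α × Bool) × ℤ) → List (List (α × Bool) × ℤ)
  | [] => []
  | (A, k) :: [] => [(A, -k - 1)]
  | (A, k) :: p :: ps => (A, -k) :: negL (p :: ps)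

lemma negL_concat (qs : List (List (α × Bool) × ℤ)) (B : List (α × Bool)) (j : ℤ) :
    negL (qs ++ [(B, j)]) = qs.map (fun p => (p.1, -p.2)) ++ [(B, -j - 1)] := by
  induction qs with
  | nil => rfl
  | cons p qs ih =>
    obtain ⟨A, k⟩ := p
    rcases qs with _ | ⟨q, qs'⟩
    · rfl
    · show (A, -k) :: negL ((q :: qs') ++ [(B, j)]) = _
      rw [ih]
      rfl

lemma vl_iff {ps : List (List (α × Bool) × ℤ)} :
    Vl x ps ↔ (∀ p ∈ ps, YW x p.1) ∧ (∀ p ∈ ps.dropLast, p.2 ≠ 0) := by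
  induction ps with
  | nil => simp [Vl]
  | cons p ps ih =>
    obtain ⟨A, k⟩ := p
    rcases ps with _ | ⟨q, qs⟩
    · simp [Vl]
    · rw [Vl, ih]
      constructor
      · rintro ⟨h1, h2, h3, h4⟩
        refine ⟨?_, ?_⟩
        · intro p hp
          rcases List.mem_cons.mp hp with rfl | hp
          · exact h1
          · exact h3 p hp
        · intro p hp
          rw [List.dropLast_cons₂] at hp
          rcases List.mem_cons.mp hp with rfl | hp
          · exact h2
          · exact h4 p hp
      · rintro ⟨h1, h2⟩
        refine ⟨h1 (A, k) List.mem_cons_self, ?_, ?_, ?_⟩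
        · exact h2 (A, k) (by rw [List.dropLast_cons₂]; simp)
        · intro p hp
          exact h1 p (List.mem_cons_of_mem _ hp)
        · intro p hp
          refine h2 p ?_
          rw [List.dropLast_cons₂]
          exact List.mem_cons_of_mem _ hp

lemma vl_negL {ps : List (List (α × Bool) × ℤ)} (h : Vl x ps) : Vl x (negL ps) := by
  rcases List.eq_nil_or_concat' ps with rfl | ⟨qs, ⟨B, j⟩, rfl⟩
  · trivial
  · rw [negL_concat]
    rw [vl_iff] at h ⊢
    obtain ⟨h1, h2⟩ := h
    constructor
    · intro p hp
      rcases List.mem_append.mp hp with hp | hp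
      · obtain ⟨q, hq, rfl⟩ := List.mem_map.mp hp
        exact h1 q (List.mem_append_left _ hq)
      · rcases List.mem_singleton.mp hp with rfl
        exact h1 (B, j) (by simp)
    · intro p hp
      rw [List.dropLast_concat] at hp
      obtain ⟨q, hq, rfl⟩ := List.mem_map.mp hp
      have := h2 q (by rw [List.dropLast_concat]; exact hq)
      simpa using this

/-- decomposition of the inverse -/
def invD : ℤ → List (List (α × Bool) × ℤ) → ℤ × List (List (α × Bool) × ℤ)
  | k, [] => (-k, [])
  | k, (A, k') :: ps => ((invD k' ps).1, (invD k' ps).2 ++ [(invRev A, -k)])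

lemma mkD_invD (k : ℤ) (ps : List (List (α × Bool) × ℤ)) :
    mkD x (invD k ps).1 (invD k ps).2 = (mkD x k ps)⁻¹ := by
  induction ps generalizing k with
  | nil => rw [invD, mkD_nil', mkD_nil', zpow_neg]
  | cons p ps ih =>
    obtain ⟨A, k'⟩ := p
    rw [invD, mkD_concat, ih k', mkD_cons', ← inv_mk]
    simp [mul_assoc]

lemma invD_exps {ps : List (List (α × Bool) × ℤ)} (h : Vl x ps) :
    ∀ k, k ≠ 0 → ∀ p ∈ (invD k ps).2, p.2 ≠ 0 := by
  induction ps with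
  | nil => intro k _ p hp; simp [invD] at hp
  | cons q ps ih =>
    obtain ⟨A, k'⟩ := q
    intro k hk p hp
    rw [invD] at hp
    rcases List.mem_append.mp hp with hp | hp
    · rcases ps with _ | ⟨r, rs⟩
      · simp [invD] at hp
      · exact ih h.tail k' (h.head_ne (by simp)) p hp
    · rcases List.mem_singleton.mp hp with rfl
      simpa using hk

lemma invD_mem_YW {ps : List (List (α × Bool) × ℤ)} (h : Vl x ps) :
    ∀ k, ∀ p ∈ (invD k ps).2, YW x p.1 := by
  induction ps with
  | nil => intro k p hp; simp [invD] at hp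
  | cons q ps ih =>
    obtain ⟨A, k'⟩ := q
    intro k p hp
    rw [invD] at hp
    rcases List.mem_append.mp hp with hp | hp
    · exact ih h.tail k' p hp
    · rcases List.mem_singleton.mp hp with rfl
      exact YW_invRev h.head_YW

lemma vl_invD {ps : List (List (α × Bool) × ℤ)} (h : Vl x ps) (k : ℤ) :
    Vl x (invD k ps).2 := by
  rw [vl_iff]
  refine ⟨invD_mem_YW h k, ?_⟩
  rcases ps with _ | ⟨⟨A, k'⟩, ps⟩
  · intro p hp; simp [invD] at hp
  · rw [invD, List.dropLast_concat]
    intro p hp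
    rcases ps with _ | ⟨r, rs⟩
    · simp [invD] at hp
    · exact invD_exps h.tail k' (h.head_ne (by simp)) p hp

end Decomp

section Phi

variable {x : α} {Y : Set α} {φ : MulAut (FreeGroup α)}
variable (hcover : ∀ a : α, a = x ∨ a ∈ Y)
variable (hφx : φ (FreeGroup.of x) = (FreeGroup.of x)⁻¹)
variable (hφy : ∀ y ∈ Y, φ (FreeGroup.of y)
      = FreeGroup.of x * FreeGroup.of y * (FreeGroup.of x)⁻¹)

include hφx

lemma phi_zpow (k : ℤ) : φ ((FreeGroup.of x) ^ k) = (FreeGroup.of x) ^ (-k) := by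
  rw [_root_.map_zpow, hφx, inv_zpow, ← zpow_neg]

include hcover hφy

lemma phi_mkA {A : List (α × Bool)} (hA : ∀ l ∈ A, l.1 ≠ x) :
    φ (FreeGroup.mk A) = FreeGroup.of x * FreeGroup.mk A * (FreeGroup.of x)⁻¹ := by
  induction A with
  | nil =>
    rw [← one_eq_mk]
    simp
  | cons l A ih =>
    obtain ⟨c, b⟩ := l
    have hc : c ∈ Y := by
      rcases hcover c with rfl | hc
      · exact absurd rfl (hA (c, b) List.mem_cons_self)
      · exact hc
    have ihA := ih (fun l hl => hA l (List.mem_cons_of_mem _ hl))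
    have hsplit : FreeGroup.mk ((c, b) :: A) = FreeGroup.mk [(c, b)] * FreeGroup.mk A := by
      rw [mul_mk]
      rfl
    have hbase : φ (FreeGroup.mk [(c, b)]) =
        FreeGroup.of x * FreeGroup.mk [(c, b)] * (FreeGroup.of x)⁻¹ := by
      cases b with
      | true =>
        have : FreeGroup.mk [(c, true)] = FreeGroup.of c := rfl
        rw [this]
        exact hφy c hc
      | false =>
        have : FreeGroup.mk [(c, false)] = (FreeGroup.of c)⁻¹ := by
          rw [show ([(c, false)] : List (α × Bool)) = invRev [(c, true)] from rfl, ← inv_mk]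
          rfl
        rw [this, _root_.map_inv, hφy c hc]
        group
    rw [hsplit, _root_.map_mul, hbase, ihA]
    group

lemma phi_phi (a : FreeGroup α) : φ (φ a) = a := by
  induction a using FreeGroup.induction_on with
  | C1 => simp
  | of c =>
    show φ (φ (FreeGroup.of c)) = FreeGroup.of c
    rcases hcover c with rfl | hc
    · rw [hφx, _root_.map_inv, hφx, inv_inv]
    · rw [hφy c hc, _root_.map_mul, _root_.map_mul, _root_.map_inv, hφx, hφy c hc]
      group
  | inv_of c h =>
    show φ (φ (FreeGroup.of c)⁻¹) = (FreeGroup.of c)⁻¹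
    rw [_root_.map_inv, _root_.map_inv]
    exact congrArg Inv.inv h
  | mul a b ha hb => rw [_root_.map_mul, _root_.map_mul, ha, hb]

lemma phi_mkD [DecidableEq α] : ∀ (ps : List (List (α × Bool) × ℤ)), Vl x ps → ps ≠ [] →
    ∀ k, φ (mkD x k ps) = mkD x (1 - k) (negL ps) := by
  intro ps
  induction ps with
  | nil => intro _ h; exact absurd rfl h
  | cons p ps2 ih =>
    obtain ⟨A, k'⟩ := p
    intro hvl _ k
    rw [mkD_cons', _root_.map_mul, _root_.map_mul, phi_zpow hφx, phi_mkA hcover hφx hφy hvl.head_YW.2.2]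
    rcases ps2 with _ | ⟨q, qs⟩
    · rw [mkD_nil', phi_zpow hφx]
      rw [show negL [(A, k')] = [(A, -k' - 1)] from rfl, mkD_cons', mkD_nil']
      group
    · rw [ih hvl.tail (by simp) k']
      rw [show negL ((A, k') :: q :: qs) = (A, -k') :: negL (q :: qs) from rfl, mkD_cons']
      have hshift : mkD x (1 - k') (negL (q :: qs)) =
          (FreeGroup.of x) ^ (1 : ℤ) * mkD x (-k') (negL (q :: qs)) := by
        rw [sub_eq_add_neg, mkD_shift]
      rw [hshift]
      group

/-- twisted conjugation preserves the `φ`-inverted condition -/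
lemma twisted {a b w : FreeGroup α} (ha : φ a = a⁻¹) (hab : a = φ w * b * w⁻¹) :
    φ b = b⁻¹ := by
  have hb : b = (φ w)⁻¹ * a * w := by rw [hab]; group
  rw [hb, _root_.map_mul, _root_.map_mul, _root_.map_inv, phi_phi hcover hφx hφy, ha]
  group

lemma main_induction [DecidableEq α] : ∀ (m : ℕ) (k : ℤ) (ps : List (List (α × Bool) × ℤ)),
    ps.length = m → Vl x ps → φ (mkD x k ps) = (mkD x k ps)⁻¹ →
    ∃ w, mkD x k ps = φ w * w⁻¹ ∨ mkD x k ps = φ w * FreeGroup.of x * w⁻¹ := by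
  intro m
  induction m using Nat.strong_induction_on with
  | _ m ih =>
    intro k ps hlen hvl hinv
    rcases ps with _ | ⟨⟨A1, k1⟩, ps2⟩
    · -- power of x
      rw [mkD_nil']
      rcases Int.even_or_odd k with ⟨j, hj⟩ | ⟨j, hj⟩
      · refine ⟨(FreeGroup.of x) ^ (-j), Or.inl ?_⟩
        rw [phi_zpow hφx, hj]
        group
      · refine ⟨(FreeGroup.of x) ^ (-j), Or.inr ?_⟩
        rw [phi_zpow hφx, hj]
        group
    · have hne : ((A1, k1) :: ps2 : List (List (α × Bool) × ℤ)) ≠ [] := by simp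
      have heq : mkD x (1 - k) (negL ((A1, k1) :: ps2)) =
          mkD x (invD k ((A1, k1) :: ps2)).1 (invD k ((A1, k1) :: ps2)).2 := by
        rw [← phi_mkD hcover hφx hφy _ hvl hne k, mkD_invD, hinv]
      obtain ⟨h1, h2⟩ := mkD_inj (vl_negL hvl) (vl_invD hvl _) heq
      rcases List.eq_nil_or_concat' ps2 with rfl | ⟨qs, ⟨Am, km⟩, rfl⟩
      · have hsingle : (A1, -k1 - 1) = (invRev A1, -k) := by
          have : negL [(A1, k1)] = (invD k [(A1, k1)]).2 := h2
          rw [show negL [(A1, k1)] = [(A1, -k1 - 1)] from rfl,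
            show (invD k [(A1, k1)]).2 = [(invRev A1, -k)] from rfl] at this
          exact List.singleton_inj.mp this
        exact (eq_invRev_false hvl.head_YW.1 hvl.head_YW.2.1
          (congrArg Prod.fst hsingle)).elim
      · -- extraction of the outer syllable relations
        have hL : negL ((A1, k1) :: (qs ++ [(Am, km)])) =
            ((A1, k1) :: qs).map (fun p => (p.1, -p.2)) ++ [(Am, -km - 1)] := by
          rw [← List.cons_append, negL_concat]
        have hR : (invD k ((A1, k1) :: (qs ++ [(Am, km)]))).2 =
            (invD k1 (qs ++ [(Am, km)])).2 ++ [(invRev A1, -k)] := rfl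
        have hlast : (Am, -km - 1) = (invRev A1, -k) := by
          have h3 := congrArg List.getLast? h2
          rw [hL, hR, List.getLast?_concat, List.getLast?_concat] at h3
          exact Option.some_injective _ h3
        have hAm : Am = invRev A1 := congrArg Prod.fst hlast
        have hk : k = km + 1 := by
          have := congrArg Prod.snd hlast
          simp only at this
          omega
        -- the descent
        set w0 : FreeGroup α := (FreeGroup.of x) ^ (-km) * FreeGroup.mk A1 with hw0
        have hb : mkD x k ((A1, k1) :: (qs ++ [(Am, km)])) =
            φ w0 * mkD x (1 + k1) qs * w0⁻¹ := by
          rw [mkD_cons', mkD_concat, hAm, ← inv_mk, hw0, _root_.map_mul, phi_zpow hφx,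
            phi_mkA hcover hφx hφy hvl.head_YW.2.2, hk,
            show (1 + k1 : ℤ) = 1 + k1 from rfl, mkD_shift]
          group
        have hbinv : φ (mkD x (1 + k1) qs) = (mkD x (1 + k1) qs)⁻¹ :=
          twisted hcover hφx hφy hinv hb
        have hqlen : qs.length < m := by
          rw [← hlen]
          simp
        have hqvl : Vl x qs := by
          rw [vl_iff] at hvl ⊢
          obtain ⟨hm1, hm2⟩ := hvl
          refine ⟨?_, ?_⟩
          · intro p hp
            exact hm1 p (by simp [hp])
          · intro p hp
            refine hm2 p ?_
            have hdl : ((A1, k1) :: (qs ++ [(Am, km)])).dropLast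
                = (A1, k1) :: (qs ++ [(Am, km)]).dropLast :=
              List.dropLast_cons_of_ne_nil (by simp)
            rw [hdl, List.dropLast_concat]
            exact List.mem_cons_of_mem _ (List.dropLast_sublist qs |>.mem hp)
          -- note: need p ∈ qs.dropLast → p ∈ qs
        obtain ⟨v, hv | hv⟩ := ih qs.length hqlen (1 + k1) qs rfl hqvl hbinv
        · refine ⟨w0 * v, Or.inl ?_⟩
          rw [hb, hv, _root_.map_mul φ w0 v]
          group
        · refine ⟨w0 * v, Or.inr ?_⟩
          rw [hb, hv, _root_.map_mul φ w0 v]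
          group

end Phi

end QC

/-- Let `φ` be the quasi-conjugation attached to a basis `{x} ∪ Y` of a free
group. If `φ a = a⁻¹`, then `a = φ(w) w⁻¹` or `a = φ(w) x w⁻¹` for some `w`. -/
theorem inverted_elements_of_quasi_conjugation (α : Type*) (x : α) (Y : Set α)
    (hx : x ∉ Y) (hY : Y.Nonempty) (hcover : ∀ a : α, a = x ∨ a ∈ Y)
    (φ : MulAut (FreeGroup α))
    (hφx : φ (FreeGroup.of x) = (FreeGroup.of x)⁻¹)
    (hφy : ∀ y ∈ Y, φ (FreeGroup.of y)
      = FreeGroup.of x * FreeGroup.of y * (FreeGroup.of x)⁻¹)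
    (a : FreeGroup α) (ha : φ a = a⁻¹) :
    ∃ w : FreeGroup α, a = φ w * w⁻¹ ∨ a = φ w * FreeGroup.of x * w⁻¹ := by
  classical
  obtain ⟨k, ps, hvl, hw⟩ :=
    QC.parse (x := x) a.toWord.length a.toWord le_rfl (QC.redW_toWord a)
  have hmk : a = QC.mkD x k ps := by
    rw [QC.mkD, hw, FreeGroup.mk_toWord]
  rw [hmk] at ha ⊢
  exact QC.main_induction hcover hφx hφy ps.length k ps rfl hvl ha
end

section
/- Let F be a free group with basis {x} ∪ Y, and let φ be the quasi-conjugation given by φ(x) = x⁻¹, φ(y) = x y x⁻¹ for y ∈ Y. Then the set C = {c ∈ F : φ(c) = x c x⁻¹} equals the subgroup generated by Y. -/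
section Aux

variable {α : Type*} [DecidableEq α]

/-- The letter-flipping map: flip the sign of every occurrence of `x`. -/
def flipLetter (x : α) (p : α × Bool) : α × Bool :=
  (p.1, if p.1 = x then !p.2 else p.2)

lemma flipLetter_fst (x : α) (p : α × Bool) : (flipLetter x p).1 = p.1 := rfl

lemma reduce_map_flip (x : α) (L : List (α × Bool)) :
    FreeGroup.reduce (L.map (flipLetter x)) = (FreeGroup.reduce L).map (flipLetter x) := by
  induction L with
  | nil => rfl
  | cons hd tl ih =>
    rw [List.map_cons, FreeGroup.reduce.cons, FreeGroup.reduce.cons, ih]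
    cases h : FreeGroup.reduce tl with
    | nil => rfl
    | cons hd2 tl2 =>
      simp only [List.map_cons]
      have hcond : ((flipLetter x hd).1 = (flipLetter x hd2).1 ∧
          (flipLetter x hd).2 = !(flipLetter x hd2).2) ↔ (hd.1 = hd2.1 ∧ hd.2 = !hd2.2) := by
        by_cases h1 : hd.1 = hd2.1
        · simp only [flipLetter_fst, h1, true_and]
          show (flipLetter x hd).2 = !(flipLetter x hd2).2 ↔ _
          simp only [flipLetter, h1]
          by_cases hx2 : hd2.1 = x
          · simp only [hx2, if_true]
            cases hd.2 <;> cases hd2.2 <;> simp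
          · simp [hx2]
        · simp [flipLetter_fst, h1]
      by_cases hc : hd.1 = hd2.1 ∧ hd.2 = !hd2.2
      · rw [if_pos (hcond.mpr hc), if_pos hc]
      · rw [if_neg (fun h => hc (hcond.mp h)), if_neg hc]
        simp [flipLetter]

/-- The endomorphism sending `x ↦ x⁻¹` and every other generator to itself. -/
noncomputable def flipHom (x : α) : FreeGroup α →* FreeGroup α :=
  FreeGroup.lift (fun a => if a = x then (FreeGroup.of x)⁻¹ else FreeGroup.of a)

lemma flipHom_mk (x : α) (L : List (α × Bool)) :
    flipHom x (FreeGroup.mk L) = FreeGroup.mk (L.map (flipLetter x)) := by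
  rw [flipHom, FreeGroup.lift_mk]
  conv_rhs => rw [← FreeGroup.lift_of_apply (FreeGroup.mk (L.map (flipLetter x)))]
  rw [FreeGroup.lift_mk, List.map_map]
  congr 1
  apply List.map_congr_left
  intro p _
  by_cases hp : p.1 = x
  · cases hb : p.2 <;> simp [flipLetter, hp, hb]
  · cases hb : p.2 <;> simp [flipLetter, hp, hb]

end Aux

/-- Let `φ` be the quasi-conjugation attached to a basis `{x} ∪ Y` of a free
group. The set of elements on which `φ` acts as conjugation by `x` is exactly
the subgroup generated by `Y`. -/
theorem conjugated_set_eq_closure (α : Type*) (x : α) (Y : Set α)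
    (hx : x ∉ Y) (hcover : ∀ a : α, a = x ∨ a ∈ Y)
    (φ : MulAut (FreeGroup α))
    (hφx : φ (FreeGroup.of x) = (FreeGroup.of x)⁻¹)
    (hφy : ∀ y ∈ Y, φ (FreeGroup.of y)
      = FreeGroup.of x * FreeGroup.of y * (FreeGroup.of x)⁻¹) :
    ∀ c : FreeGroup α,
      φ c = FreeGroup.of x * c * (FreeGroup.of x)⁻¹ ↔
        c ∈ Subgroup.closure (FreeGroup.of '' Y) := by
  classical
  intro c
  constructor
  · intro hc
    -- relate φ to flipHom
    have hψ : ∀ d : FreeGroup α,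
        flipHom x d = (FreeGroup.of x)⁻¹ * φ d * FreeGroup.of x := by
      have := FreeGroup.ext_hom (flipHom x)
        (((MulAut.conj ((FreeGroup.of x)⁻¹ : FreeGroup α)).toMonoidHom).comp φ.toMonoidHom)
        (by
          intro a
          rcases hcover a with rfl | ha
          · simp [flipHom, FreeGroup.lift_apply_of, hφx, MulAut.conj]
          · have hax : a ≠ x := fun h => hx (h ▸ ha)
            simp [flipHom, FreeGroup.lift_apply_of, hax, hφy a ha, MulAut.conj, mul_assoc])
      intro d
      have := DFunLike.congr_fun this d
      simpa [MulAut.conj, mul_assoc] using this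
    have hfix : flipHom x c = c := by
      rw [hψ, hc]
      group
    -- pass to reduced words
    have hword : c.toWord.map (flipLetter x) = c.toWord := by
      have h1 : flipHom x c = FreeGroup.mk (c.toWord.map (flipLetter x)) := by
        conv_lhs => rw [← FreeGroup.mk_toWord (x := c)]
        exact flipHom_mk x c.toWord
      have h2 : FreeGroup.mk (c.toWord.map (flipLetter x)) = FreeGroup.mk c.toWord := by
        rw [← h1, hfix, FreeGroup.mk_toWord]
      have := congrArg FreeGroup.toWord h2
      rwa [FreeGroup.toWord_mk, FreeGroup.toWord_mk, reduce_map_flip,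
        FreeGroup.reduce_toWord] at this
    -- every letter of c.toWord is in Y
    have hletters : ∀ p ∈ c.toWord, p.1 ∈ Y := by
      intro p hp
      rcases hcover p.1 with hpx | hpY
      · exfalso
        have hself : ∀ (L : List (α × Bool)), L.map (flipLetter x) = L →
            ∀ q ∈ L, flipLetter x q = q := by
          intro L
          induction L with
          | nil => intro _ q hq; cases hq
          | cons a l ihl =>
            intro hL q hq
            rw [List.map_cons, List.cons.injEq] at hL
            rcases List.mem_cons.mp hq with rfl | hq
            · exact hL.1
            · exact ihl hL.2 q hq
        have := hself c.toWord hword p hp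
        have : (flipLetter x p).2 = p.2 := congrArg Prod.snd this
        simp [flipLetter, hpx] at this
      · exact hpY
    -- conclude membership in the closure
    have hcw : c = FreeGroup.mk c.toWord := (FreeGroup.mk_toWord).symm
    rw [hcw]
    clear hword hfix hc hcw
    generalize c.toWord = L at hletters ⊢
    induction L with
    | nil => exact Subgroup.one_mem _
    | cons hd tl ih =>
      obtain ⟨a, b⟩ := hd
      have hsplit : FreeGroup.mk ((a, b) :: tl) = FreeGroup.mk [(a, b)] * FreeGroup.mk tl := by
        rw [FreeGroup.mul_mk]; rfl
      rw [hsplit]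
      refine mul_mem ?_ (ih fun p hp => hletters p (List.mem_cons_of_mem _ hp))
      have hhd : a ∈ Y := hletters (a, b) (List.mem_cons_self)
      have hofmem : FreeGroup.of a ∈ Subgroup.closure (FreeGroup.of '' Y) :=
        Subgroup.subset_closure ⟨a, hhd, rfl⟩
      cases b
      · have : FreeGroup.mk [(a, false)] = (FreeGroup.of a)⁻¹ := by
          rw [FreeGroup.of, FreeGroup.inv_mk]; rfl
        rw [this]; exact inv_mem hofmem
      · exact hofmem
  · intro hc
    induction hc using Subgroup.closure_induction with
    | mem a ha =>
      rcases ha with ⟨y, hy, rfl⟩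
      exact hφy y hy
    | one => simp
    | mul a b _ _ ha hb => rw [map_mul, ha, hb]; group
    | inv a _ ha =>
      rw [map_inv, ha]
      group
end

section
/- Let F be a free group with basis {x, y} and let k ∈ ℤ. The conjugation by x^k (the inner automorphism w ↦ x^k w x^{-k}) is the product of the two symmetries α (α(x) = x⁻¹, α(y) = y⁻¹) and α' (α'(x) = x⁻¹, α'(y) = x^{-k} y⁻¹ x^{k}), which are conjugate in Aut(F). -/
/-- In a free group with basis `{x, y}`, conjugation by `x^k` is the product of
the two conjugate symmetries `α : x ↦ x⁻¹, y ↦ y⁻¹` and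
`α' : x ↦ x⁻¹, y ↦ x⁻ᵏ y⁻¹ xᵏ`. -/
theorem conjugation_product_of_symmetries (X : Type*) (x y : X) (hxy : x ≠ y)
    (hcover : ∀ a : X, a = x ∨ a = y) (k : ℤ)
    (a a' : MulAut (FreeGroup X))
    (hax : a (FreeGroup.of x) = (FreeGroup.of x)⁻¹)
    (hay : a (FreeGroup.of y) = (FreeGroup.of y)⁻¹)
    (ha'x : a' (FreeGroup.of x) = (FreeGroup.of x)⁻¹)
    (ha'y : a' (FreeGroup.of y)
      = (FreeGroup.of x) ^ (-k) * (FreeGroup.of y)⁻¹ * (FreeGroup.of x) ^ k) :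
    (∀ w : FreeGroup X,
      (a * a') w = (FreeGroup.of x) ^ k * w * ((FreeGroup.of x) ^ k)⁻¹) ∧
    IsConj a a' := by
  classical
  set X' := FreeGroup.of x with hX'
  set Y' := FreeGroup.of y with hY'
  have hpow : ∀ (b : MulAut (FreeGroup X)) (m : ℤ), b (X' ^ m) = (b X') ^ m := by
    intro b m; exact map_zpow b X' m
  have part1 : ∀ w : FreeGroup X, (a * a') w = X' ^ k * w * (X' ^ k)⁻¹ := by
    have h1 : (a.toMonoidHom.comp a'.toMonoidHom)
        = (MulAut.conj (X' ^ k)).toMonoidHom := by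
      apply FreeGroup.ext_hom
      intro b
      rcases hcover b with rfl | rfl
      · simp only [MonoidHom.comp_apply, MulEquiv.coe_toMonoidHom, ha'x, map_inv, hax,
          MulAut.conj_apply, ← hX']
        group
      · simp only [MonoidHom.comp_apply, MulEquiv.coe_toMonoidHom, ha'y,
          MulAut.conj_apply, ← hX', ← hY', map_mul, map_inv, hpow, hax, hay]
        group
    intro w
    have := DFunLike.congr_fun h1 w
    simpa only [MonoidHom.comp_apply, MulEquiv.coe_toMonoidHom, MulAut.conj_apply,
      MulAut.mul_apply] using this
  refine ⟨part1, ?_⟩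
  -- Part 2: construct τ : x ↦ x, y ↦ x^k y
  let f : FreeGroup X →* FreeGroup X :=
    FreeGroup.lift (fun b => if b = x then X' else X' ^ k * FreeGroup.of b)
  let g : FreeGroup X →* FreeGroup X :=
    FreeGroup.lift (fun b => if b = x then X' else X' ^ (-k) * FreeGroup.of b)
  have hfx : f X' = X' := by simp [f, hX']
  have hfy : f Y' = X' ^ k * Y' := by simp [f, hX', hY', hxy.symm]
  have hgx : g X' = X' := by simp [g, hX']
  have hgy : g Y' = X' ^ (-k) * Y' := by simp [g, hX', hY', hxy.symm]
  have hgf : g.comp f = MonoidHom.id _ := by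
    apply FreeGroup.ext_hom; intro b
    rcases hcover b with rfl | rfl
    · simp only [MonoidHom.comp_apply, MonoidHom.id_apply, ← hX', hfx, hgx]
    · simp only [MonoidHom.comp_apply, MonoidHom.id_apply, ← hX', ← hY', hfy, map_mul,
        hpow, hgx, hgy, map_zpow]
      group
  have hfg : f.comp g = MonoidHom.id _ := by
    apply FreeGroup.ext_hom; intro b
    rcases hcover b with rfl | rfl
    · simp only [MonoidHom.comp_apply, MonoidHom.id_apply, ← hX', hfx, hgx]
    · simp only [MonoidHom.comp_apply, MonoidHom.id_apply, ← hX', ← hY', hgy, map_mul,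
        hpow, hfx, hfy, map_zpow]
      group
  let τ : MulAut (FreeGroup X) := MonoidHom.toMulEquiv f g hgf hfg
  have hτ : ∀ w, τ w = f w := fun _ => rfl
  have hτx : τ X' = X' := by rw [hτ]; exact hfx
  have hτy : τ Y' = X' ^ k * Y' := by rw [hτ]; exact hfy
  have key : a * τ = τ * a' := by
    apply MulEquiv.toMonoidHom_injective
    apply FreeGroup.ext_hom
    intro b
    rcases hcover b with rfl | rfl
    · simp only [MulEquiv.coe_toMonoidHom, MulAut.mul_apply, ← hX', hτx, hax, ha'x,
        map_inv]
    · simp only [MulEquiv.coe_toMonoidHom, MulAut.mul_apply, ← hY', hτy, ha'y,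
        map_mul, map_inv, map_zpow, hax, hay, hτx, ← hX']
      group
  rw [isConj_iff]
  refine ⟨τ⁻¹, ?_⟩
  calc τ⁻¹ * a * τ⁻¹⁻¹ = τ⁻¹ * (a * τ) := by group
    _ = τ⁻¹ * (τ * a') := by rw [key]
    _ = a' := by group
end

section
/- Let F be a free group of infinite rank. Then every inner automorphism of F is a product of two conjugations by primitive elements. -/
/-- An element of a free group is primitive if it belongs to some basis. -/
def FreeGroup.IsPrimitive {α : Type*} (g : FreeGroup α) : Prop :=
  ∃ S : Set (FreeGroup α), Nonempty (FreeGroupBasis S (FreeGroup α)) ∧ g ∈ S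

/-- The image of a canonical generator under an automorphism is primitive. -/
lemma FreeGroup.isPrimitive_of_aut {α : Type*} (Φ : FreeGroup α ≃* FreeGroup α) (a : α) :
    FreeGroup.IsPrimitive (Φ (FreeGroup.of a)) := by
  set b := (FreeGroupBasis.ofFreeGroup α).map Φ with hb
  refine ⟨Set.range ⇑b, ⟨b.reindex (Equiv.ofInjective (↑b) b.injective)⟩, ⟨a, ?_⟩⟩
  simp [hb]

lemma FreeGroup.lift_eq_self {α : Type*} [DecidableEq α] (a : α) (f : α → FreeGroup α)
    (hf : ∀ x, x ≠ a → f x = FreeGroup.of x) (g : FreeGroup α)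
    (hg : ∀ p ∈ g.toWord, p.1 ≠ a) : FreeGroup.lift f g = g := by
  conv_lhs => rw [← FreeGroup.mk_toWord (x := g)]
  conv_rhs => rw [← FreeGroup.mk_toWord (x := g)]
  rw [FreeGroup.lift_mk]
  have : g.toWord.map (fun x => cond x.2 (f x.1) (f x.1)⁻¹)
      = g.toWord.map (fun x => cond x.2 (FreeGroup.of x.1) (FreeGroup.of x.1)⁻¹) := by
    apply List.map_congr_left
    intro p hp
    rw [hf p.1 (hg p hp)]
  rw [this, ← FreeGroup.lift_mk (f := FreeGroup.of), FreeGroup.lift_of_apply]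

/-- Every inner automorphism of a free group of infinite rank is a product of
two conjugations by primitive elements. -/
theorem inner_aut_product_of_primitive_conjugations (α : Type*) [Infinite α]
    (g : FreeGroup α) :
    ∃ p q : FreeGroup α, p.IsPrimitive ∧ q.IsPrimitive ∧
      MulAut.conj g = MulAut.conj p * MulAut.conj q := by
  classical
  obtain ⟨a, ha⟩ := Infinite.exists_notMem_finset (g.toWord.map Prod.fst).toFinset
  have hg : ∀ p ∈ g.toWord, p.1 ≠ a := by
    intro p hp hpa
    exact ha (List.mem_toFinset.mpr (List.mem_map.mpr ⟨p, hp, hpa⟩))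
  set f : α → FreeGroup α := fun x => if x = a then g * (FreeGroup.of a)⁻¹ else FreeGroup.of x
    with hfdef
  set f' : α → FreeGroup α := fun x => if x = a then (FreeGroup.of a)⁻¹ * g else FreeGroup.of x
    with hf'def
  have hf : ∀ x, x ≠ a → f x = FreeGroup.of x := fun x hx => by simp [hfdef, hx]
  have hf' : ∀ x, x ≠ a → f' x = FreeGroup.of x := fun x hx => by simp [hf'def, hx]
  have hφg : FreeGroup.lift f g = g := FreeGroup.lift_eq_self a f hf g hg
  have hψg : FreeGroup.lift f' g = g := FreeGroup.lift_eq_self a f' hf' g hg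
  have h1 : (FreeGroup.lift f).comp (FreeGroup.lift f') = MonoidHom.id _ := by
    apply FreeGroup.ext_hom
    intro x
    by_cases hx : x = a
    · subst hx
      simp only [MonoidHom.coe_comp, Function.comp_apply, FreeGroup.lift_apply_of, MonoidHom.id_apply]
      simp only [hf'def, if_pos rfl, map_mul, map_inv, FreeGroup.lift_apply_of, hφg,
        hfdef, if_pos rfl]
      simp only [if_true]
      rw [show (FreeGroup.lift fun x_1 => if x_1 = x then g * (FreeGroup.of x)⁻¹ else FreeGroup.of x_1) g = g from hφg]
      group
    · simp [hf x hx, hf' x hx]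
  have h2 : (FreeGroup.lift f').comp (FreeGroup.lift f) = MonoidHom.id _ := by
    apply FreeGroup.ext_hom
    intro x
    by_cases hx : x = a
    · subst hx
      simp only [MonoidHom.coe_comp, Function.comp_apply, FreeGroup.lift_apply_of, MonoidHom.id_apply]
      simp only [hfdef, if_pos rfl, map_mul, map_inv, FreeGroup.lift_apply_of, hψg,
        hf'def, if_pos rfl]
      simp only [if_true]
      rw [show (FreeGroup.lift fun x_1 => if x_1 = x then (FreeGroup.of x)⁻¹ * g else FreeGroup.of x_1) g = g from hψg]
      group
    · simp [hf x hx, hf' x hx]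
  set Φ : FreeGroup α ≃* FreeGroup α :=
    MonoidHom.toMulEquiv (FreeGroup.lift f) (FreeGroup.lift f') h2 h1 with hΦ
  have hΦa : Φ (FreeGroup.of a) = g * (FreeGroup.of a)⁻¹ := by
    simp [hΦ, MonoidHom.toMulEquiv, hfdef]
  refine ⟨g * (FreeGroup.of a)⁻¹, FreeGroup.of a, ?_, ?_, ?_⟩
  · rw [← hΦa]; exact FreeGroup.isPrimitive_of_aut Φ a
  · exact FreeGroup.isPrimitive_of_aut (MulEquiv.refl _) a
  · rw [← map_mul]
    congr 1
    group
end
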